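/- arXiv:2512.22716 — 8 statements merged into one kernel-verified Lean document; each statement's English description precedes it below -/
import Mathlib

section
/- Let n ≥ 1, let α > 0, let Q_min ≤ Q_max be real numbers with Δ = Q_max − Q_min, and let q ∈ ℝⁿ satisfy q_i ∈ [Q_min, Q_max] for all i. Define f(b,q) = α·log(∑_{i=1}^n b_i·exp(q_i/α)). Then for all probability vectors b, b' ∈ ℝⁿ, |f(b,q) − f(b',q)| ≤ α·exp(Δ/α)·∑_{i=1}^n |b_i − b'_i|. -/
lemma log_lip_aux {m x y : ℝ} (hm : 0 < m) (hx : m ≤ x) (hy : m ≤ y) :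
    |Real.log x - Real.log y| ≤ |x - y| / m := by
  have key : ∀ a b : ℝ, m ≤ a → m ≤ b → Real.log a - Real.log b ≤ |a - b| / m := by
    intro a b ha hb
    rcases le_total a b with h | h
    · have : Real.log a ≤ Real.log b := Real.log_le_log (lt_of_lt_of_le hm ha) h
      have : Real.log a - Real.log b ≤ 0 := by linarith
      exact this.trans (div_nonneg (abs_nonneg _) hm.le)
    · have hb0 : 0 < b := lt_of_lt_of_le hm hb
      have ha0 : 0 < a := lt_of_lt_of_le hm ha
      have : Real.log a - Real.log b = Real.log (a / b) := (Real.log_div ha0.ne' hb0.ne').symm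
      rw [this]
      have h1 : Real.log (a / b) ≤ a / b - 1 := by
        have := Real.log_le_sub_one_of_pos (x := a / b) (by positivity)
        linarith
      have h2 : a / b - 1 = (a - b) / b := by field_simp
      have h3 : (a - b) / b ≤ (a - b) / m := by
        apply div_le_div_of_nonneg_left (by linarith) hm hb
      have h4 : (a - b) / m ≤ |a - b| / m :=
        div_le_div_of_nonneg_right (le_abs_self _) hm.le
      linarith
  rw [abs_sub_le_iff]
  exact ⟨key x y hx hy, by rw [abs_sub_comm]; exact key y x hy hx⟩

/-- log-sum-exp with base measure is Lipschitz in the base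
measure: if all `qᵢ ∈ [Q_min, Q_max]` with `Δ = Q_max − Q_min`, then for all
probability vectors `b, b'`,
`|f(b,q) − f(b',q)| ≤ α·exp(Δ/α)·∑ᵢ |bᵢ − b'ᵢ|`. -/
theorem logsumexp_lipschitz_in_b
    (n : ℕ) (hn : 1 ≤ n)
    (α : ℝ) (hα : 0 < α)
    (Qmin Qmax : ℝ) (hQ : Qmin ≤ Qmax) (Δ : ℝ) (hΔ : Δ = Qmax - Qmin)
    (q : Fin n → ℝ) (hq : ∀ i, q i ∈ Set.Icc Qmin Qmax)
    (f : (Fin n → ℝ) → (Fin n → ℝ) → ℝ)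
    (hf : ∀ b q, f b q = α * Real.log (∑ i, b i * Real.exp (q i / α))) :
    ∀ b b' : Fin n → ℝ,
      (∀ i, 0 ≤ b i) → (∑ i, b i = 1) →
      (∀ i, 0 ≤ b' i) → (∑ i, b' i = 1) →
      |f b q - f b' q| ≤ α * Real.exp (Δ / α) * ∑ i, |b i - b' i| := by
  intro b b' hb hbs hb' hbs'
  set m := Real.exp (Qmin / α) with hm
  have hmpos : 0 < m := Real.exp_pos _
  have lb : ∀ c : Fin n → ℝ, (∀ i, 0 ≤ c i) → (∑ i, c i = 1) →
      m ≤ ∑ i, c i * Real.exp (q i / α) := by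
    intro c hc hcs
    calc m = ∑ i, c i * m := by rw [← Finset.sum_mul, hcs, one_mul]
    _ ≤ ∑ i, c i * Real.exp (q i / α) := by
        apply Finset.sum_le_sum
        intro i _
        exact mul_le_mul_of_nonneg_left
          (Real.exp_le_exp.2 (div_le_div_of_nonneg_right (hq i).1 hα.le)) (hc i)
  set S := ∑ i, b i * Real.exp (q i / α)
  set S' := ∑ i, b' i * Real.exp (q i / α)
  have hS : m ≤ S := lb b hb hbs
  have hS' : m ≤ S' := lb b' hb' hbs'
  have diff : |S - S'| ≤ Real.exp (Qmax / α) * ∑ i, |b i - b' i| := by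
    have : S - S' = ∑ i, (b i - b' i) * Real.exp (q i / α) := by
      simp [S, S', ← Finset.sum_sub_distrib, sub_mul]
    rw [this, Finset.mul_sum]
    refine (Finset.abs_sum_le_sum_abs _ _).trans (Finset.sum_le_sum fun i _ => ?_)
    rw [abs_mul, abs_of_pos (Real.exp_pos _), mul_comm]
    exact mul_le_mul_of_nonneg_right
      (Real.exp_le_exp.2 (div_le_div_of_nonneg_right (hq i).2 hα.le)) (abs_nonneg _)
  have hlog : |Real.log S - Real.log S'| ≤ |S - S'| / m := log_lip_aux hmpos hS hS'
  have hfd : f b q - f b' q = α * (Real.log S - Real.log S') := by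
    rw [hf, hf]; ring
  rw [hfd, abs_mul, abs_of_pos hα]
  have hexp : Real.exp (Qmax / α) / m = Real.exp (Δ / α) := by
    rw [hm, ← Real.exp_sub, hΔ]; congr 1; ring
  calc α * |Real.log S - Real.log S'| ≤ α * (|S - S'| / m) :=
        mul_le_mul_of_nonneg_left hlog hα.le
    _ ≤ α * ((Real.exp (Qmax / α) * ∑ i, |b i - b' i|) / m) :=
        mul_le_mul_of_nonneg_left (div_le_div_of_nonneg_right diff hmpos.le) hα.le
    _ = α * Real.exp (Δ / α) * ∑ i, |b i - b' i| := by
        rw [← hexp]; ring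
end

section
/- Let n ≥ 1, let α > 0, let Q_min ≤ Q_max be real numbers with Δ = Q_max − Q_min, and let q, q' ∈ ℝⁿ satisfy q_i, q'_i ∈ [Q_min, Q_max] for all i. Define f(b,q) = α·log(∑_{i=1}^n b_i·exp(q_i/α)). Then for all probability vectors b, b' ∈ ℝⁿ, |f(b,q) − f(b',q')| ≤ max_i |q_i − q'_i| + α·exp(Δ/α)·∑_{i=1}^n |b_i − b'_i|. -/
/-!
Split `f b q - f b' q'` through `f b q'`. Changing the exponents with the weights fixed moves
`log ∑ bᵢ exp xᵢ` by at most `M = maxᵢ |xᵢ - x'ᵢ|`, since each summand is scaled by a factor in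
`[exp (-M), exp M]`. Changing the weights with the exponents fixed moves the sum by at most
`exp (max x) · ∑ᵢ |bᵢ - b'ᵢ|`, and both sums are at least `exp (min x)`, so by `log t ≤ t - 1`
the logarithm moves by at most `exp (max x - min x) · ∑ᵢ |bᵢ - b'ᵢ|`.
-/

open Finset Real

namespace Real

theorem log_sub_log_le_div {x y : ℝ} (hx : 0 < x) (hy : 0 < y) :
    log x - log y ≤ (x - y) / y := by
  rw [← log_div hx.ne' hy.ne', sub_div, div_self hy.ne']
  exact log_le_sub_one_of_pos (div_pos hx hy)

theorem abs_log_sub_log_le_div {m x y : ℝ} (hm : 0 < m) (hx : m ≤ x) (hy : m ≤ y) :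
    |log x - log y| ≤ |x - y| / m := by
  have hle : ∀ {s t : ℝ}, m ≤ s → m ≤ t → log s - log t ≤ |s - t| / m := fun hs ht =>
    (log_sub_log_le_div (hm.trans_le hs) (hm.trans_le ht)).trans
      (div_le_div₀ (abs_nonneg _) (le_abs_self _) hm ht)
  rw [abs_le]
  constructor
  · linarith [abs_sub_comm x y ▸ hle hy hx]
  · exact hle hx hy

end Real

section LogSumExp

variable {ι : Type*} [Fintype ι]

noncomputable def logSumExp (b x : ι → ℝ) : ℝ :=
  log (∑ i, b i * exp (x i))

theorem le_sum_mul_of_le {b g : ι → ℝ} {m : ℝ} (hb : ∀ i, 0 ≤ b i) (hb1 : ∑ i, b i = 1)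
    (hg : ∀ i, m ≤ g i) : m ≤ ∑ i, b i * g i :=
  calc m = ∑ i, b i * m := by rw [← sum_mul, hb1, one_mul]
    _ ≤ ∑ i, b i * g i := sum_le_sum fun i _ => mul_le_mul_of_nonneg_left (hg i) (hb i)

theorem sum_mul_exp_pos {b : ι → ℝ} (hb : ∀ i, 0 ≤ b i) (hb_pos : 0 < ∑ i, b i) (x : ι → ℝ) :
    0 < ∑ i, b i * exp (x i) := by
  obtain ⟨j, -, hj⟩ := exists_lt_of_sum_lt (f := fun _ => (0 : ℝ)) (by simpa using hb_pos)
  exact sum_pos' (fun i _ => mul_nonneg (hb i) (exp_pos _).le)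
    ⟨j, mem_univ j, mul_pos hj (exp_pos _)⟩

theorem logSumExp_sub_le {b u v : ι → ℝ} {M : ℝ} (hb : ∀ i, 0 ≤ b i) (hb_pos : 0 < ∑ i, b i)
    (huv : ∀ i, u i - v i ≤ M) : logSumExp b u - logSumExp b v ≤ M := by
  have hle : ∑ i, b i * exp (u i) ≤ exp M * ∑ i, b i * exp (v i) := by
    rw [mul_sum]
    refine sum_le_sum fun i _ => ?_
    rw [mul_left_comm, ← exp_add]
    exact mul_le_mul_of_nonneg_left (exp_le_exp.mpr (by linarith [huv i])) (hb i)
  have hlog := log_le_log (sum_mul_exp_pos hb hb_pos u) hle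
  rw [log_mul (exp_ne_zero M) (sum_mul_exp_pos hb hb_pos v).ne', log_exp] at hlog
  unfold logSumExp
  linarith

theorem abs_logSumExp_sub_le {b u v : ι → ℝ} {M : ℝ} (hb : ∀ i, 0 ≤ b i)
    (hb_pos : 0 < ∑ i, b i) (huv : ∀ i, |u i - v i| ≤ M) :
    |logSumExp b u - logSumExp b v| ≤ M := by
  refine abs_le.mpr ⟨?_, logSumExp_sub_le hb hb_pos fun i => (abs_le.mp (huv i)).2⟩
  have := logSumExp_sub_le hb hb_pos fun i => (abs_le.mp (abs_sub_comm (u i) (v i) ▸ huv i)).2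
  linarith

theorem abs_logSumExp_sub_le_exp_mul {b b' x : ι → ℝ} {xmin xmax : ℝ}
    (hb : ∀ i, 0 ≤ b i) (hb1 : ∑ i, b i = 1) (hb' : ∀ i, 0 ≤ b' i) (hb'1 : ∑ i, b' i = 1)
    (hx : ∀ i, x i ∈ Set.Icc xmin xmax) :
    |logSumExp b x - logSumExp b' x| ≤ exp (xmax - xmin) * ∑ i, |b i - b' i| := by
  have hmin : ∀ {c : ι → ℝ}, (∀ i, 0 ≤ c i) → ∑ i, c i = 1 →
      exp xmin ≤ ∑ i, c i * exp (x i) := fun hc hc1 =>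
    le_sum_mul_of_le hc hc1 fun i => exp_le_exp.mpr (hx i).1
  have hdiff : |∑ i, b i * exp (x i) - ∑ i, b' i * exp (x i)| ≤ exp xmax * ∑ i, |b i - b' i| :=
    calc |∑ i, b i * exp (x i) - ∑ i, b' i * exp (x i)|
        = |∑ i, (b i - b' i) * exp (x i)| := by simp only [← sum_sub_distrib, sub_mul]
      _ ≤ ∑ i, |b i - b' i| * exp (x i) := by
          simpa only [abs_mul, abs_exp] using
            abs_sum_le_sum_abs (fun i => (b i - b' i) * exp (x i)) univ
      _ ≤ ∑ i, |b i - b' i| * exp xmax :=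
          sum_le_sum fun i _ =>
            mul_le_mul_of_nonneg_left (exp_le_exp.mpr (hx i).2) (abs_nonneg _)
      _ = exp xmax * ∑ i, |b i - b' i| := by rw [← sum_mul, mul_comm]
  calc |logSumExp b x - logSumExp b' x|
      ≤ |∑ i, b i * exp (x i) - ∑ i, b' i * exp (x i)| / exp xmin :=
        abs_log_sub_log_le_div (exp_pos _) (hmin hb hb1) (hmin hb' hb'1)
    _ ≤ exp xmax * (∑ i, |b i - b' i|) / exp xmin := by gcongr
    _ = exp (xmax - xmin) * ∑ i, |b i - b' i| := by rw [exp_sub]; ring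

end LogSumExp

theorem logsumexp_joint_lipschitz_general
    (n : ℕ) (hn : 1 ≤ n)
    (α : ℝ) (hα : 0 < α)
    (Qmin Qmax : ℝ) (Δ : ℝ) (hΔ : Δ = Qmax - Qmin)
    (q q' : Fin n → ℝ)
    (hq' : ∀ i, q' i ∈ Set.Icc Qmin Qmax)
    (f : (Fin n → ℝ) → (Fin n → ℝ) → ℝ)
    (hf : ∀ b q, f b q = α * Real.log (∑ i, b i * Real.exp (q i / α))) :
    ∀ b b' : Fin n → ℝ,
      (∀ i, 0 ≤ b i) → (∑ i, b i = 1) →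
      (∀ i, 0 ≤ b' i) → (∑ i, b' i = 1) →
      |f b q - f b' q'| ≤
        Finset.univ.sup' (Finset.univ_nonempty_iff.mpr ⟨⟨0, hn⟩⟩)
          (fun i => |q i - q' i|)
        + α * Real.exp (Δ / α) * ∑ i, |b i - b' i| := by
  intro b b' hb hb1 hb' hb'1
  set M := Finset.univ.sup' (Finset.univ_nonempty_iff.mpr ⟨⟨0, hn⟩⟩) fun i => |q i - q' i|
  have hf' : ∀ c p, f c p = α * logSumExp c (p · / α) := hf
  have hshift : |logSumExp b (q · / α) - logSumExp b (q' · / α)| ≤ M / α :=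
    abs_logSumExp_sub_le hb (hb1 ▸ one_pos) fun i => by
      rw [← sub_div, abs_div, abs_of_pos hα]
      exact div_le_div_of_nonneg_right (le_sup' (fun i => |q i - q' i|) (mem_univ i)) hα.le
  have hweights : |logSumExp b (q' · / α) - logSumExp b' (q' · / α)|
      ≤ exp (Δ / α) * ∑ i, |b i - b' i| := by
    rw [hΔ, sub_div]
    exact abs_logSumExp_sub_le_exp_mul hb hb1 hb' hb'1 fun i =>
      ⟨div_le_div_of_nonneg_right (hq' i).1 hα.le, div_le_div_of_nonneg_right (hq' i).2 hα.le⟩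
  calc |f b q - f b' q'|
      = α * |(logSumExp b (q · / α) - logSumExp b (q' · / α))
          + (logSumExp b (q' · / α) - logSumExp b' (q' · / α))| := by
        rw [hf', hf', sub_add_sub_cancel, ← mul_sub, abs_mul, abs_of_pos hα]
    _ ≤ α * (M / α + exp (Δ / α) * ∑ i, |b i - b' i|) :=
        mul_le_mul_of_nonneg_left ((abs_add_le _ _).trans (add_le_add hshift hweights)) hα.le
    _ = M + α * exp (Δ / α) * ∑ i, |b i - b' i| := by field_simp

/-- joint Lipschitz bound for log-sum-exp with base measure:
if all `qᵢ, q'ᵢ ∈ [Q_min, Q_max]` with `Δ = Q_max − Q_min`, then for all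
probability vectors `b, b'`,
`|f(b,q) − f(b',q')| ≤ maxᵢ |qᵢ − q'ᵢ| + α·exp(Δ/α)·∑ᵢ |bᵢ − b'ᵢ|`. -/
theorem logsumexp_joint_lipschitz
    (n : ℕ) (hn : 1 ≤ n)
    (α : ℝ) (hα : 0 < α)
    (Qmin Qmax : ℝ) (hQ : Qmin ≤ Qmax) (Δ : ℝ) (hΔ : Δ = Qmax - Qmin)
    (q q' : Fin n → ℝ)
    (hq : ∀ i, q i ∈ Set.Icc Qmin Qmax) (hq' : ∀ i, q' i ∈ Set.Icc Qmin Qmax)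
    (f : (Fin n → ℝ) → (Fin n → ℝ) → ℝ)
    (hf : ∀ b q, f b q = α * Real.log (∑ i, b i * Real.exp (q i / α))) :
    ∀ b b' : Fin n → ℝ,
      (∀ i, 0 ≤ b i) → (∑ i, b i = 1) →
      (∀ i, 0 ≤ b' i) → (∑ i, b' i = 1) →
      |f b q - f b' q'| ≤
        Finset.univ.sup' (Finset.univ_nonempty_iff.mpr ⟨⟨0, hn⟩⟩)
          (fun i => |q i - q' i|)
        + α * Real.exp (Δ / α) * ∑ i, |b i - b' i| :=
  logsumexp_joint_lipschitz_general n hn α hα Qmin Qmax Δ hΔ q q' hq' f hf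
end

section
/- Let X and C be finite nonempty sets, let α > 0, let γ ∈ [0,1), let r : X × C → ℝ, let P : X × C → (X → ℝ) be a stochastic kernel (P(x'|x,c) ≥ 0 and ∑_{x'} P(x'|x,c) = 1 for all (x,c)), and for each x' ∈ X let b(·|x') be a probability distribution on C. Define the operator T on functions Q : X × C → ℝ by (TQ)(x,c) = r(x,c) + γ·∑_{x'∈X} P(x'|x,c)·α·log(∑_{c'∈C} b(c'|x')·exp(Q(x',c')/α)). Then T is a γ-contraction in the supremum norm, i.e. max_{(x,c)} |(TQ)(x,c) − (TQ')(x,c)| ≤ γ·max_{(x,c)} |Q(x,c) − Q'(x,c)| for all Q, Q' : X × C → ℝ, and consequently T has a unique fixed point Q* satisfying TQ* = Q*. -/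
/-!
The soft value `α log ∑ w exp (f / α)` is monotone in `f` and shifting `f` by a constant shifts it
by the same constant, so it is 1-Lipschitz for the sup norm. Averaging over the stochastic kernel
`P` keeps the bound and the factor `γ` scales it, so `T` is a `γ`-contraction; Banach's fixed
point theorem on the complete space `X × C → ℝ` gives the unique fixed point.
-/

open Finset Real

noncomputable def softValue {C : Type*} [Fintype C] (α : ℝ) (w f : C → ℝ) : ℝ :=
  α * log (∑ c, w c * exp (f c / α))

section SoftValue

variable {C : Type*} [Fintype C] {α : ℝ} {w f g : C → ℝ} {M : ℝ}

lemma softValue_le_add (hα : 0 < α) (hw : ∀ c, 0 ≤ w c) (hw_pos : 0 < ∑ c, w c)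
    (hfg : ∀ c, f c ≤ g c + M) : softValue α w f ≤ softValue α w g + M := by
  have hsum_pos : ∀ h : C → ℝ, 0 < ∑ c, w c * exp (h c / α) := fun h => by
    obtain ⟨c, -, hc⟩ := exists_lt_of_sum_lt (f := fun _ => (0 : ℝ)) (by simpa using hw_pos)
    exact sum_pos' (fun c _ => mul_nonneg (hw c) (exp_pos _).le)
      ⟨c, mem_univ c, mul_pos hc (exp_pos _)⟩
  have hsum_le : ∑ c, w c * exp (f c / α) ≤ (∑ c, w c * exp (g c / α)) * exp (M / α) := by
    rw [sum_mul]
    refine sum_le_sum fun c _ => ?_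
    rw [mul_assoc, ← exp_add, ← add_div]
    exact mul_le_mul_of_nonneg_left (exp_le_exp.2 (by gcongr; exact hfg c)) (hw c)
  have hlog := log_le_log (hsum_pos f) hsum_le
  rw [log_mul (hsum_pos g).ne' (exp_pos _).ne', log_exp] at hlog
  calc softValue α w f ≤ α * (log (∑ c, w c * exp (g c / α)) + M / α) :=
        mul_le_mul_of_nonneg_left hlog hα.le
    _ = softValue α w g + M := by rw [softValue, mul_add, mul_div_cancel₀ _ hα.ne']

lemma abs_softValue_sub_le (hα : 0 < α) (hw : ∀ c, 0 ≤ w c) (hw_pos : 0 < ∑ c, w c)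
    (hfg : ∀ c, |f c - g c| ≤ M) : |softValue α w f - softValue α w g| ≤ M := by
  obtain ⟨hfg₁, hfg₂⟩ := forall_and.1 fun c => abs_sub_le_iff.1 (hfg c)
  exact abs_sub_le_iff.2
    ⟨sub_le_iff_le_add'.2 (softValue_le_add hα hw hw_pos fun c => sub_le_iff_le_add'.1 (hfg₁ c)),
      sub_le_iff_le_add'.2 (softValue_le_add hα hw hw_pos fun c => sub_le_iff_le_add'.1 (hfg₂ c))⟩

end SoftValue

lemma abs_sum_mul_sub_sum_mul_le {ι : Type*} [Fintype ι] {p u v : ι → ℝ} {M : ℝ}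
    (hp : ∀ i, 0 ≤ p i) (hp_sum : ∑ i, p i = 1) (huv : ∀ i, |u i - v i| ≤ M) :
    |∑ i, p i * u i - ∑ i, p i * v i| ≤ M :=
  calc |∑ i, p i * u i - ∑ i, p i * v i| = |∑ i, p i * (u i - v i)| := by
        simp only [mul_sub, sum_sub_distrib]
    _ ≤ ∑ i, p i * M := by
        refine (abs_sum_le_sum_abs _ _).trans (sum_le_sum fun i _ => ?_)
        rw [abs_mul, abs_of_nonneg (hp i)]
        exact mul_le_mul_of_nonneg_left (huv i) (hp i)
    _ = M := by rw [← sum_mul, hp_sum, one_mul]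

lemma contractingWith_of_abs_sub_le {ι : Type*} [Fintype ι] {F : (ι → ℝ) → ι → ℝ}
    {K : NNReal} (hK : K < 1)
    (hF : ∀ f g M, (∀ i, |f i - g i| ≤ M) → ∀ i, |F f i - F g i| ≤ K * M) :
    ContractingWith K F := by
  refine ⟨hK, LipschitzWith.of_dist_le_mul fun f g => ?_⟩
  refine (dist_pi_le_iff (by positivity)).2 fun i => ?_
  simpa only [Real.dist_eq] using hF f g _ (fun j => by
    simpa only [Real.dist_eq] using dist_le_pi_dist f g j) i

/-- contraction of the KL-regularised evaluation operator:
the operator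
`(TQ)(x,c) = r(x,c) + γ·∑_{x'} P(x'|x,c)·α·log ∑_{c'} b(c'|x')·exp(Q(x',c')/α)`
is a `γ`-contraction in the sup norm, hence has a unique fixed point. -/
theorem kl_eval_operator_contraction
    {X : Type*} {C : Type*} [Fintype X] [Fintype C] [Nonempty X] [Nonempty C]
    (α : ℝ) (hα : 0 < α)
    (γ : ℝ) (hγ : γ ∈ Set.Ico (0 : ℝ) 1)
    (r : X × C → ℝ)
    (P : X × C → X → ℝ)
    (hPnonneg : ∀ p x', 0 ≤ P p x') (hPsum : ∀ p, ∑ x', P p x' = 1)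
    (b : X → C → ℝ)
    (hbnonneg : ∀ x' c', 0 ≤ b x' c') (hbsum : ∀ x', ∑ c', b x' c' = 1)
    (T : (X × C → ℝ) → (X × C → ℝ))
    (hT : ∀ Q x c, T Q (x, c) = r (x, c) +
      γ * ∑ x', P (x, c) x' *
        (α * Real.log (∑ c', b x' c' * Real.exp (Q (x', c') / α)))) :
    (∀ Q Q' : X × C → ℝ,
      Finset.univ.sup' Finset.univ_nonempty (fun p : X × C => |T Q p - T Q' p|) ≤
        γ * Finset.univ.sup' Finset.univ_nonempty (fun p : X × C => |Q p - Q' p|)) ∧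
    (∃! Qstar : X × C → ℝ, T Qstar = Qstar) := by
  obtain ⟨hγ0, hγ1⟩ := hγ
  have hT_abs_sub_le : ∀ (Q Q' : X × C → ℝ) (M : ℝ), (∀ p, |Q p - Q' p| ≤ M) →
      ∀ p, |T Q p - T Q' p| ≤ γ * M := by
    rintro Q Q' M hM ⟨x, c⟩
    rw [hT, hT, add_sub_add_left_eq_sub, ← mul_sub, abs_mul, abs_of_nonneg hγ0]
    refine mul_le_mul_of_nonneg_left (abs_sum_mul_sub_sum_mul_le (hPnonneg _) (hPsum _) ?_) hγ0
    exact fun x' => abs_softValue_sub_le hα (hbnonneg x') ((hbsum x').symm ▸ one_pos)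
      fun c' => hM (x', c')
  have hT_contracting : ContractingWith ⟨γ, hγ0⟩ T :=
    contractingWith_of_abs_sub_le (by exact_mod_cast hγ1) hT_abs_sub_le
  refine ⟨fun Q Q' => sup'_le _ _ fun p _ =>
      hT_abs_sub_le Q Q' _ (fun q => le_sup' (fun p => |Q p - Q' p|) (mem_univ q)) p,
    ⟨_, hT_contracting.fixedPoint_isFixedPt, fun Q hQ => hT_contracting.fixedPoint_unique hQ⟩⟩
end

section
/- Let S and A be finite nonempty sets, let γ ∈ [0,1), let P : S × A → (S → ℝ) be a stochastic kernel, let R : S × A → ℝ satisfy |R(s,a)| ≤ R_max for all (s,a), and let π₁, π₂ : S → (A → ℝ) assign to each state a probability distribution on A. Suppose V₁, V₂ : S → ℝ satisfy the Bellman equations V_i(s) = ∑_{a∈A} π_i(a|s)·(R(s,a) + γ·∑_{s'∈S} P(s'|s,a)·V_i(s')) for i = 1,2 and all s ∈ S. Then max_{s∈S} |V₁(s) − V₂(s)| ≤ (2·R_max/(1−γ)²)·max_{s∈S} TV(π₁(·|s), π₂(·|s)). -/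
/-!
Let `Q₂(s,a) = R(s,a) + γ ∑ P(s'|s,a) V₂(s')`. Subtracting the Bellman equations gives
`V₁ - V₂ = ∑ₐ (π₁ - π₂) Q₂ + γ ∑ₐ π₁ P (V₁ - V₂)`.
The Bellman equation alone forces `|V₂| ≤ R_max/(1-γ)`, hence `|Q₂| ≤ R_max/(1-γ)`, so the
first term is at most `2 ε R_max/(1-γ)` with `ε` the largest total variation distance, while
averaging against `π₁` and `P` bounds the second by `γ ‖V₁ - V₂‖∞`. Solving
`‖V₁ - V₂‖∞ ≤ 2 ε R_max/(1-γ) + γ ‖V₁ - V₂‖∞` gives the claim.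
-/

open Finset

theorem abs_sum_mul_le_sum_abs_mul {ι : Type*} [Fintype ι] {g f : ι → ℝ} {C : ℝ}
    (hf : ∀ i, |f i| ≤ C) : |∑ i, g i * f i| ≤ (∑ i, |g i|) * C := by
  refine (abs_sum_le_sum_abs _ _).trans ?_
  rw [sum_mul]
  gcongr with i
  rw [abs_mul]
  exact mul_le_mul_of_nonneg_left (hf i) (abs_nonneg _)

theorem abs_sum_mul_le_of_mem_stdSimplex {ι : Type*} [Fintype ι] {w f : ι → ℝ} {C : ℝ}
    (hw : w ∈ stdSimplex ℝ ι) (hf : ∀ i, |f i| ≤ C) : |∑ i, w i * f i| ≤ C := by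
  simpa [abs_of_nonneg (hw.1 _), hw.2] using abs_sum_mul_le_sum_abs_mul (g := w) hf

theorem le_div_one_sub_of_le_add_mul {x a γ : ℝ} (hγ : γ < 1) (h : x ≤ a + γ * x) :
    x ≤ a / (1 - γ) := by
  rw [le_div_iff₀ (sub_pos.2 hγ)]
  linarith

namespace MDP

variable {S A : Type*} [Fintype S] {γ Rmax : ℝ} {P : S × A → S → ℝ} {R : S × A → ℝ}

def qValue (γ : ℝ) (P : S × A → S → ℝ) (R : S × A → ℝ) (V : S → ℝ) (s : S) (a : A) : ℝ :=
  R (s, a) + γ * ∑ s', P (s, a) s' * V s'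

theorem abs_qValue_le (hγ : 0 ≤ γ) (hP : ∀ p, P p ∈ stdSimplex ℝ S)
    (hR : ∀ p, |R p| ≤ Rmax) {V : S → ℝ} {M : ℝ} (hV : ∀ s, |V s| ≤ M) (s : S) (a : A) :
    |qValue γ P R V s a| ≤ Rmax + γ * M := by
  refine (abs_add_le _ _).trans (add_le_add (hR _) ?_)
  rw [abs_mul, abs_of_nonneg hγ]
  exact mul_le_mul_of_nonneg_left (abs_sum_mul_le_of_mem_stdSimplex (hP _) hV) hγ

variable [Fintype A] {π π₁ π₂ : S → A → ℝ} {V V₁ V₂ : S → ℝ}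

theorem abs_le_of_bellman (hγ : γ ∈ Set.Ico 0 1) (hP : ∀ p, P p ∈ stdSimplex ℝ S)
    (hR : ∀ p, |R p| ≤ Rmax) (hπ : ∀ s, π s ∈ stdSimplex ℝ A)
    (hV : ∀ s, V s = ∑ a, π s a * qValue γ P R V s a) (s : S) :
    |V s| ≤ Rmax / (1 - γ) := by
  have : Nonempty S := ⟨s⟩
  have hle_norm (s' : S) : |V s'| ≤ ‖V‖ := Real.norm_eq_abs (V s') ▸ norm_le_pi_norm V s'
  have hnorm : ‖V‖ ≤ Rmax + γ * ‖V‖ := by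
    refine (pi_norm_le_iff_of_nonempty V).2 fun s => ?_
    rw [Real.norm_eq_abs, hV s]
    exact abs_sum_mul_le_of_mem_stdSimplex (hπ s) (abs_qValue_le hγ.1 hP hR hle_norm s)
  exact (hle_norm s).trans (le_div_one_sub_of_le_add_mul hγ.2 hnorm)

theorem abs_qValue_le_of_bellman (hγ : γ ∈ Set.Ico 0 1) (hP : ∀ p, P p ∈ stdSimplex ℝ S)
    (hR : ∀ p, |R p| ≤ Rmax) (hπ : ∀ s, π s ∈ stdSimplex ℝ A)
    (hV : ∀ s, V s = ∑ a, π s a * qValue γ P R V s a) (s : S) (a : A) :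
    |qValue γ P R V s a| ≤ Rmax / (1 - γ) := by
  have h1γ : 1 - γ ≠ 0 := (sub_pos.2 hγ.2).ne'
  calc |qValue γ P R V s a| ≤ Rmax + γ * (Rmax / (1 - γ)) :=
        abs_qValue_le hγ.1 hP hR (abs_le_of_bellman hγ hP hR hπ hV) s a
    _ = Rmax / (1 - γ) := by field_simp; ring

theorem bellman_sub_eq (hV₁ : ∀ s, V₁ s = ∑ a, π₁ s a * qValue γ P R V₁ s a)
    (hV₂ : ∀ s, V₂ s = ∑ a, π₂ s a * qValue γ P R V₂ s a) (s : S) :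
    V₁ s - V₂ s = ∑ a, (π₁ s a - π₂ s a) * qValue γ P R V₂ s a +
      γ * ∑ a, π₁ s a * ∑ s', P (s, a) s' * (V₁ s' - V₂ s') := by
  rw [hV₁ s, hV₂ s, mul_sum, ← sum_sub_distrib, ← sum_add_distrib]
  refine sum_congr rfl fun a _ => ?_
  simp only [qValue, mul_sub, sum_sub_distrib]
  ring

theorem abs_sub_le_of_bellman (hγ : γ ∈ Set.Ico 0 1) (hP : ∀ p, P p ∈ stdSimplex ℝ S)
    (hR : ∀ p, |R p| ≤ Rmax) (hπ₁ : ∀ s, π₁ s ∈ stdSimplex ℝ A)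
    (hπ₂ : ∀ s, π₂ s ∈ stdSimplex ℝ A)
    (hV₁ : ∀ s, V₁ s = ∑ a, π₁ s a * qValue γ P R V₁ s a)
    (hV₂ : ∀ s, V₂ s = ∑ a, π₂ s a * qValue γ P R V₂ s a)
    {D : ℝ} (hD : ∀ s, |V₁ s - V₂ s| ≤ D) (s : S) :
    |V₁ s - V₂ s| ≤ (∑ a, |π₁ s a - π₂ s a|) * (Rmax / (1 - γ)) + γ * D := by
  rw [bellman_sub_eq hV₁ hV₂ s]
  refine (abs_add_le _ _).trans (add_le_add
    (abs_sum_mul_le_sum_abs_mul (abs_qValue_le_of_bellman hγ hP hR hπ₂ hV₂ s)) ?_)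
  rw [abs_mul, abs_of_nonneg hγ.1]
  exact mul_le_mul_of_nonneg_left (abs_sum_mul_le_of_mem_stdSimplex (hπ₁ s)
    fun a => abs_sum_mul_le_of_mem_stdSimplex (hP _) hD) hγ.1

end MDP

open MDP in
/-- value difference bound via policy total variation:
if `V₁, V₂` are the Bellman values of policies `π₁, π₂` in a discounted MDP
with rewards bounded by `R_max`, then
`max_s |V₁(s) − V₂(s)| ≤ (2·R_max/(1−γ)²)·max_s TV(π₁(·|s), π₂(·|s))`. -/
theorem value_difference_bound_via_policy_tv
    {S : Type*} {A : Type*} [Fintype S] [Fintype A] [Nonempty S] [Nonempty A]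
    (γ : ℝ) (hγ : γ ∈ Set.Ico (0 : ℝ) 1)
    (P : S × A → S → ℝ)
    (hPnonneg : ∀ p s', 0 ≤ P p s') (hPsum : ∀ p, ∑ s', P p s' = 1)
    (R : S × A → ℝ) (Rmax : ℝ) (hR : ∀ p, |R p| ≤ Rmax)
    (π₁ π₂ : S → A → ℝ)
    (hπ₁nonneg : ∀ s a, 0 ≤ π₁ s a) (hπ₁sum : ∀ s, ∑ a, π₁ s a = 1)
    (hπ₂nonneg : ∀ s a, 0 ≤ π₂ s a) (hπ₂sum : ∀ s, ∑ a, π₂ s a = 1)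
    (V₁ V₂ : S → ℝ)
    (hV₁ : ∀ s, V₁ s = ∑ a, π₁ s a * (R (s, a) + γ * ∑ s', P (s, a) s' * V₁ s'))
    (hV₂ : ∀ s, V₂ s = ∑ a, π₂ s a * (R (s, a) + γ * ∑ s', P (s, a) s' * V₂ s')) :
    Finset.univ.sup' Finset.univ_nonempty (fun s : S => |V₁ s - V₂ s|) ≤
      (2 * Rmax / (1 - γ) ^ 2) *
        Finset.univ.sup' Finset.univ_nonempty
          (fun s : S => (1 / 2) * ∑ a, |π₁ s a - π₂ s a|) := by
  have hP : ∀ p, P p ∈ stdSimplex ℝ S := fun p => ⟨hPnonneg p, hPsum p⟩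
  have hπ₁ : ∀ s, π₁ s ∈ stdSimplex ℝ A := fun s => ⟨hπ₁nonneg s, hπ₁sum s⟩
  have hπ₂ : ∀ s, π₂ s ∈ stdSimplex ℝ A := fun s => ⟨hπ₂nonneg s, hπ₂sum s⟩
  set D := univ.sup' univ_nonempty fun s : S => |V₁ s - V₂ s|
  set ε := univ.sup' univ_nonempty fun s : S => (1 / 2) * ∑ a, |π₁ s a - π₂ s a|
  have hRmax : 0 ≤ Rmax := (abs_nonneg _).trans (hR (Classical.arbitrary _))
  have h1γ : 0 < 1 - γ := sub_pos.2 hγ.2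
  have hstate (s : S) : |V₁ s - V₂ s| ≤ 2 * ε * (Rmax / (1 - γ)) + γ * D := by
    have htv : (1 / 2) * ∑ a, |π₁ s a - π₂ s a| ≤ ε :=
      le_sup' (fun s => (1 / 2) * ∑ a, |π₁ s a - π₂ s a|) (mem_univ s)
    refine (abs_sub_le_of_bellman hγ hP hR hπ₁ hπ₂ hV₁ hV₂ (D := D)
      (fun s => le_sup' (fun s => |V₁ s - V₂ s|) (mem_univ s)) s).trans ?_
    gcongr
    linarith
  calc D ≤ 2 * ε * (Rmax / (1 - γ)) / (1 - γ) :=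
        le_div_one_sub_of_le_add_mul hγ.2 (sup'_le _ _ fun s _ => hstate s)
    _ = 2 * Rmax / (1 - γ) ^ 2 * ε := by field_simp
end

section
/- Let S and A be finite nonempty sets, let γ ∈ [0,1), let P : S × A → (S → ℝ) be a stochastic kernel, let R : S × A → ℝ, and let π₁, π₂ : S → (A → ℝ) assign to each state a probability distribution on A. Define the Bellman operators (T^{π_i}V)(s) = ∑_{a∈A} π_i(a|s)·(R(s,a) + γ·∑_{s'∈S} P(s'|s,a)·V(s')). Suppose V₁ and V₂ satisfy V₁ = T^{π₁}V₁ and V₂ = T^{π₂}V₂. Then max_{s∈S} |V₁(s) − V₂(s)| ≤ (1/(1−γ))·max_{s∈S} |(T^{π₁}V₁)(s) − (T^{π₂}V₁)(s)|. -/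
/-!
Under the sup metric on `S → ℝ` the Bellman operator `T^π` of any policy is a `γ`-contraction,
because it only averages `V` against the probability weights `π(·|s)` and `P(·|s,a)`. For a
contraction `T` with fixed point `V₂`, every `V` satisfies `‖V - V₂‖ ≤ ‖V - T V‖ / (1 - γ)`;
taking `T = T^{π₂}` and `V = V₁ = T^{π₁} V₁` gives the bound.
-/

open Finset NNReal

lemma abs_sum_mul_le_of_stochastic {ι : Type*} [Fintype ι] {w x : ι → ℝ} {M : ℝ}
    (hw : ∀ i, 0 ≤ w i) (hw_sum : ∑ i, w i = 1) (hx : ∀ i, |x i| ≤ M) :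
    |∑ i, w i * x i| ≤ M :=
  calc |∑ i, w i * x i| ≤ ∑ i, |w i * x i| := abs_sum_le_sum_abs _ _
    _ ≤ ∑ i, w i * M := sum_le_sum fun i _ => by
        rw [abs_mul, abs_of_nonneg (hw i)]
        exact mul_le_mul_of_nonneg_left (hx i) (hw i)
    _ = M := by rw [← sum_mul, hw_sum, one_mul]

lemma dist_pi_eq_sup'_abs_sub {S : Type*} [Fintype S] [Nonempty S] (f g : S → ℝ) :
    dist f g = univ.sup' univ_nonempty (fun s => |f s - g s|) :=
  le_antisymm
    (dist_pi_le_iff'.2 fun s => (Real.dist_eq _ _).trans_le <|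
      le_sup' (fun s => |f s - g s|) (mem_univ s))
    (sup'_le _ _ fun s _ => (Real.dist_eq _ _).symm.trans_le <| dist_le_pi_dist f g s)

noncomputable def bellmanOp {S A : Type*} [Fintype S] [Fintype A] (γ : ℝ) (P : S × A → S → ℝ)
    (R : S × A → ℝ) (π : S → A → ℝ) (V : S → ℝ) (s : S) : ℝ :=
  ∑ a, π s a * (R (s, a) + γ * ∑ s', P (s, a) s' * V s')

lemma bellmanOp_sub_bellmanOp {S A : Type*} [Fintype S] [Fintype A] (γ : ℝ)
    (P : S × A → S → ℝ) (R : S × A → ℝ) (π : S → A → ℝ) (V W : S → ℝ) (s : S) :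
    bellmanOp γ P R π V s - bellmanOp γ P R π W s =
      ∑ a, π s a * (γ * ∑ s', P (s, a) s' * (V s' - W s')) := by
  rw [bellmanOp, bellmanOp, ← sum_sub_distrib]
  refine sum_congr rfl fun a _ => ?_
  simp only [mul_sub, sum_sub_distrib]
  ring

lemma bellmanOp_lipschitzWith {S A : Type*} [Fintype S] [Fintype A] {γ : ℝ≥0}
    {P : S × A → S → ℝ} (hP : ∀ p s', 0 ≤ P p s') (hP_sum : ∀ p, ∑ s', P p s' = 1)
    (R : S × A → ℝ) {π : S → A → ℝ} (hπ : ∀ s a, 0 ≤ π s a) (hπ_sum : ∀ s, ∑ a, π s a = 1) :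
    LipschitzWith γ (bellmanOp γ P R π) := by
  refine LipschitzWith.of_dist_le_mul fun V W => ?_
  have hγ : (0 : ℝ) ≤ γ := γ.2
  refine (dist_pi_le_iff (by positivity)).2 fun s => ?_
  rw [Real.dist_eq, bellmanOp_sub_bellmanOp]
  refine abs_sum_mul_le_of_stochastic (hπ s) (hπ_sum s) fun a => ?_
  rw [abs_mul, abs_of_nonneg hγ]
  refine mul_le_mul_of_nonneg_left ?_ hγ
  exact abs_sum_mul_le_of_stochastic (hP (s, a)) (hP_sum (s, a)) fun s' =>
    (Real.dist_eq _ _).symm.trans_le <| dist_le_pi_dist V W s'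

theorem bellman_fixed_point_perturbation_general
    {S : Type*} {A : Type*} [Fintype S] [Fintype A] [Nonempty S]
    (γ : ℝ) (hγ : γ ∈ Set.Ico (0 : ℝ) 1)
    (P : S × A → S → ℝ)
    (hPnonneg : ∀ p s', 0 ≤ P p s') (hPsum : ∀ p, ∑ s', P p s' = 1)
    (R : S × A → ℝ)
    (π₂ : S → A → ℝ)
    (hπ₂nonneg : ∀ s a, 0 ≤ π₂ s a) (hπ₂sum : ∀ s, ∑ a, π₂ s a = 1)
    (T₁ T₂ : (S → ℝ) → (S → ℝ))
    (hT₂ : ∀ V s, T₂ V s = ∑ a, π₂ s a * (R (s, a) + γ * ∑ s', P (s, a) s' * V s'))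
    (V₁ V₂ : S → ℝ) (hV₁ : T₁ V₁ = V₁) (hV₂ : T₂ V₂ = V₂) :
    Finset.univ.sup' Finset.univ_nonempty (fun s : S => |V₁ s - V₂ s|) ≤
      (1 / (1 - γ)) *
        Finset.univ.sup' Finset.univ_nonempty
          (fun s : S => |T₁ V₁ s - T₂ V₁ s|) := by
  obtain ⟨hγ0, hγ1⟩ := hγ
  lift γ to ℝ≥0 using hγ0
  have hT₂_eq : T₂ = bellmanOp γ P R π₂ := funext fun V => funext (hT₂ V)
  have hcontr : ContractingWith γ T₂ := ⟨mod_cast hγ1,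
    hT₂_eq ▸ bellmanOp_lipschitzWith hPnonneg hPsum R hπ₂nonneg hπ₂sum⟩
  have h := hcontr.dist_inequality V₁ V₂
  rw [hV₂, dist_self, add_zero, dist_pi_eq_sup'_abs_sub, dist_pi_eq_sup'_abs_sub] at h
  rwa [hV₁, one_div_mul_eq_div]

/-- fixed-point perturbation bound for Bellman operators:
if `V₁ = T^{π₁}V₁` and `V₂ = T^{π₂}V₂`, then
`max_s |V₁(s) − V₂(s)| ≤ (1/(1−γ))·max_s |(T^{π₁}V₁)(s) − (T^{π₂}V₁)(s)|`. -/
theorem bellman_fixed_point_perturbation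
    {S : Type*} {A : Type*} [Fintype S] [Fintype A] [Nonempty S] [Nonempty A]
    (γ : ℝ) (hγ : γ ∈ Set.Ico (0 : ℝ) 1)
    (P : S × A → S → ℝ)
    (hPnonneg : ∀ p s', 0 ≤ P p s') (hPsum : ∀ p, ∑ s', P p s' = 1)
    (R : S × A → ℝ)
    (π₁ π₂ : S → A → ℝ)
    (hπ₁nonneg : ∀ s a, 0 ≤ π₁ s a) (hπ₁sum : ∀ s, ∑ a, π₁ s a = 1)
    (hπ₂nonneg : ∀ s a, 0 ≤ π₂ s a) (hπ₂sum : ∀ s, ∑ a, π₂ s a = 1)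
    (T₁ T₂ : (S → ℝ) → (S → ℝ))
    (hT₁ : ∀ V s, T₁ V s = ∑ a, π₁ s a * (R (s, a) + γ * ∑ s', P (s, a) s' * V s'))
    (hT₂ : ∀ V s, T₂ V s = ∑ a, π₂ s a * (R (s, a) + γ * ∑ s', P (s, a) s' * V s'))
    (V₁ V₂ : S → ℝ) (hV₁ : T₁ V₁ = V₁) (hV₂ : T₂ V₂ = V₂) :
    Finset.univ.sup' Finset.univ_nonempty (fun s : S => |V₁ s - V₂ s|) ≤
      (1 / (1 - γ)) *
        Finset.univ.sup' Finset.univ_nonempty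
          (fun s : S => |T₁ V₁ s - T₂ V₁ s|) :=
  bellman_fixed_point_perturbation_general γ hγ P hPnonneg hPsum R π₂ hπ₂nonneg hπ₂sum T₁ T₂ hT₂ V₁
    V₂ hV₁ hV₂
end

section
/- Let S and A be finite nonempty sets, let γ ∈ [0,1), let P : S × A → (S → ℝ) be a stochastic kernel, let R : S × A → ℝ satisfy |R(s,a)| ≤ R_max, let π* : S → (A → ℝ) assign to each state a probability distribution on A with Bellman fixed point V* (i.e. V*(s) = ∑_a π*(a|s)·(R(s,a) + γ·∑_{s'} P(s'|s,a)·V*(s'))), and let (π_n)_{n∈ℕ} be a sequence of such policies with corresponding Bellman fixed points (V_n)_{n∈ℕ}. If max_{s∈S} TV(π_n(·|s), π*(·|s)) → 0 as n → ∞, then max_{s∈S} |V_n(s) − V*(s)| → 0 as n → ∞. -/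
/-! With `Q* (s, a) = R (s, a) + γ 𝔼_{P(s,a)} V*`, the two Bellman equations give
`V_n - V* = ∑ₐ (π_n - π*) Q* + γ ∑ₐ π_n 𝔼_P (V_n - V*)`. The first term is at most
`2 TV(π_n, π*) ‖Q*‖∞`, the second at most `γ ‖V_n - V*‖∞`, so
`‖V_n - V*‖∞ ≤ 2 ‖Q*‖∞ / (1 - γ) · max_s TV(π_n(·|s), π*(·|s))`. -/

open Finset

section Distributions

variable {ι : Type*} [Fintype ι]

noncomputable def tvDist (p q : ι → ℝ) : ℝ := (1 / 2) * ∑ i, |p i - q i|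

theorem abs_sum_mul_le_of_stochastic_s13 {w f : ι → ℝ} {B : ℝ} (hw : ∀ i, 0 ≤ w i)
    (hw1 : ∑ i, w i = 1) (hf : ∀ i, |f i| ≤ B) : |∑ i, w i * f i| ≤ B :=
  calc |∑ i, w i * f i| ≤ ∑ i, w i * |f i| := by
        simpa only [abs_mul, abs_of_nonneg (hw _)] using
          abs_sum_le_sum_abs (fun i => w i * f i) univ
    _ ≤ ∑ i, w i * B := sum_le_sum fun i _ => mul_le_mul_of_nonneg_left (hf i) (hw i)
    _ = B := by rw [← sum_mul, hw1, one_mul]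

theorem abs_sum_sub_mul_le_tvDist {p q f : ι → ℝ} {B : ℝ} (hf : ∀ i, |f i| ≤ B) :
    |∑ i, (p i - q i) * f i| ≤ 2 * tvDist p q * B :=
  calc |∑ i, (p i - q i) * f i| ≤ ∑ i, |p i - q i| * |f i| := by
        simpa only [abs_mul] using abs_sum_le_sum_abs (fun i => (p i - q i) * f i) univ
    _ ≤ ∑ i, |p i - q i| * B :=
        sum_le_sum fun i _ => mul_le_mul_of_nonneg_left (hf i) (abs_nonneg _)
    _ = 2 * tvDist p q * B := by rw [← sum_mul, tvDist]; ring

end Distributions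

theorem Finset.sup'_univ_abs_eq_norm {ι : Type*} [Fintype ι] [Nonempty ι] (f : ι → ℝ) :
    univ.sup' univ_nonempty (fun i => |f i|) = ‖f‖ := by
  refine le_antisymm (sup'_le _ _ fun i _ => ?_) ?_
  · simpa only [Real.norm_eq_abs] using norm_le_pi_norm f i
  · exact (pi_norm_le_iff_of_nonempty f).2 fun i => by
      simpa only [Real.norm_eq_abs] using le_sup' (fun i => |f i|) (mem_univ i)

section Bellman

variable {S A : Type*} [Fintype S] {γ : ℝ} {P : S × A → S → ℝ} {R : S × A → ℝ}

def actionValue (R : S × A → ℝ) (γ : ℝ) (P : S × A → S → ℝ) (V : S → ℝ) :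
    S × A → ℝ :=
  fun p => R p + γ * ∑ s', P p s' * V s'

theorem abs_actionValue_sub_le (hγ : 0 ≤ γ) (hP : ∀ p s', 0 ≤ P p s')
    (hP1 : ∀ p, ∑ s', P p s' = 1) (V W : S → ℝ) (p : S × A) :
    |actionValue R γ P V p - actionValue R γ P W p| ≤ γ * ‖V - W‖ := by
  have hexp : actionValue R γ P V p - actionValue R γ P W p =
      γ * ∑ s', P p s' * (V - W) s' := by
    simp only [actionValue, Pi.sub_apply, mul_sub, sum_sub_distrib]
    ring
  rw [hexp, abs_mul, abs_of_nonneg hγ]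
  refine mul_le_mul_of_nonneg_left (abs_sum_mul_le_of_stochastic_s13 (hP p) (hP1 p) fun s' => ?_) hγ
  simpa only [Real.norm_eq_abs] using norm_le_pi_norm (V - W) s'

def IsBellmanFixedPoint [Fintype A] (R : S × A → ℝ) (γ : ℝ) (P : S × A → S → ℝ)
    (π : S → A → ℝ) (V : S → ℝ) : Prop :=
  ∀ s, V s = ∑ a, π s a * actionValue R γ P V (s, a)

theorem IsBellmanFixedPoint.norm_sub_le [Fintype A] [Nonempty S] (hγ : γ ∈ Set.Ico (0 : ℝ) 1)
    (hP : ∀ p s', 0 ≤ P p s') (hP1 : ∀ p, ∑ s', P p s' = 1)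
    {π π' : S → A → ℝ} (hπ : ∀ s a, 0 ≤ π s a) (hπ1 : ∀ s, ∑ a, π s a = 1)
    {V V' : S → ℝ} (hV : IsBellmanFixedPoint R γ P π V)
    (hV' : IsBellmanFixedPoint R γ P π' V')
    {δ : ℝ} (hδ : ∀ s, tvDist (π s) (π' s) ≤ δ) :
    ‖V - V'‖ ≤ 2 * ‖actionValue R γ P V'‖ / (1 - γ) * δ := by
  obtain ⟨hγ0, hγ1⟩ := hγ
  set Q := actionValue R γ P V
  set Q' := actionValue R γ P V'
  have hpoint : ∀ s, |V s - V' s| ≤ 2 * δ * ‖Q'‖ + γ * ‖V - V'‖ := fun s => by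
    have hsplit : V s - V' s =
        ∑ a, (π s a - π' s a) * Q' (s, a) + ∑ a, π s a * (Q (s, a) - Q' (s, a)) := by
      rw [hV, hV', ← sum_sub_distrib, ← sum_add_distrib]
      exact sum_congr rfl fun a _ => by ring
    have hpolicy : |∑ a, (π s a - π' s a) * Q' (s, a)| ≤ 2 * δ * ‖Q'‖ := by
      refine (abs_sum_sub_mul_le_tvDist (B := ‖Q'‖) fun a => ?_).trans ?_
      · simpa only [Real.norm_eq_abs] using norm_le_pi_norm Q' (s, a)
      · gcongr; exact hδ s
    have hvalue : |∑ a, π s a * (Q (s, a) - Q' (s, a))| ≤ γ * ‖V - V'‖ :=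
      abs_sum_mul_le_of_stochastic_s13 (hπ s) (hπ1 s) fun a =>
        abs_actionValue_sub_le hγ0 hP hP1 V V' (s, a)
    rw [hsplit]
    exact (abs_add_le _ _).trans (add_le_add hpolicy hvalue)
  have hnorm : ‖V - V'‖ ≤ 2 * δ * ‖Q'‖ + γ * ‖V - V'‖ :=
    (pi_norm_le_iff_of_nonempty (V - V')).2 fun s => by
      simpa only [Real.norm_eq_abs, Pi.sub_apply] using hpoint s
  rw [div_mul_eq_mul_div, le_div_iff₀ (sub_pos.2 hγ1)]
  linarith

end Bellman

theorem value_convergence_of_policy_tv_convergence_general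
    {S : Type*} {A : Type*} [Fintype S] [Fintype A] [Nonempty S]
    (γ : ℝ) (hγ : γ ∈ Set.Ico (0 : ℝ) 1)
    (P : S × A → S → ℝ)
    (hPnonneg : ∀ p s', 0 ≤ P p s') (hPsum : ∀ p, ∑ s', P p s' = 1)
    (R : S × A → ℝ)
    (πstar : S → A → ℝ)
    (Vstar : S → ℝ)
    (hVstar : ∀ s, Vstar s =
      ∑ a, πstar s a * (R (s, a) + γ * ∑ s', P (s, a) s' * Vstar s'))
    (π : ℕ → S → A → ℝ)
    (hπnonneg : ∀ n s a, 0 ≤ π n s a) (hπsum : ∀ n s, ∑ a, π n s a = 1)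
    (V : ℕ → S → ℝ)
    (hV : ∀ n s, V n s =
      ∑ a, π n s a * (R (s, a) + γ * ∑ s', P (s, a) s' * V n s'))
    (hTV : Filter.Tendsto
      (fun n => Finset.univ.sup' Finset.univ_nonempty
        (fun s : S => (1 / 2) * ∑ a, |π n s a - πstar s a|))
      Filter.atTop (nhds 0)) :
    Filter.Tendsto
      (fun n => Finset.univ.sup' Finset.univ_nonempty
        (fun s : S => |V n s - Vstar s|))
      Filter.atTop (nhds 0) := by
  set C := 2 * ‖actionValue R γ P Vstar‖ / (1 - γ)
  have hbound : ∀ n, ‖V n - Vstar‖ ≤ C * univ.sup' univ_nonempty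
      (fun s => tvDist (π n s) (πstar s)) := fun n =>
    IsBellmanFixedPoint.norm_sub_le hγ hPnonneg hPsum (hπnonneg n) (hπsum n) (hV n) hVstar
      fun s => le_sup' (fun s => tvDist (π n s) (πstar s)) (mem_univ s)
  have hlim : Filter.Tendsto (fun n => C * univ.sup' univ_nonempty
      (fun s => tvDist (π n s) (πstar s))) Filter.atTop (nhds 0) := by
    simpa only [mul_zero, tvDist] using hTV.const_mul C
  have hsup_eq_norm : (fun n => univ.sup' univ_nonempty (fun s => |V n s - Vstar s|)) =
      fun n => ‖V n - Vstar‖ := funext fun n => sup'_univ_abs_eq_norm (V n - Vstar)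
  rw [hsup_eq_norm]
  exact squeeze_zero (fun n => norm_nonneg _) hbound hlim

/-- asymptotic optimality under vanishing policy TV: if the
policies `π_n` converge to `π*` uniformly in total variation, then their
Bellman values converge uniformly to `V*`. -/
theorem value_convergence_of_policy_tv_convergence
    {S : Type*} {A : Type*} [Fintype S] [Fintype A] [Nonempty S] [Nonempty A]
    (γ : ℝ) (hγ : γ ∈ Set.Ico (0 : ℝ) 1)
    (P : S × A → S → ℝ)
    (hPnonneg : ∀ p s', 0 ≤ P p s') (hPsum : ∀ p, ∑ s', P p s' = 1)
    (R : S × A → ℝ) (Rmax : ℝ) (hR : ∀ p, |R p| ≤ Rmax)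
    (πstar : S → A → ℝ)
    (hπstarnonneg : ∀ s a, 0 ≤ πstar s a) (hπstarsum : ∀ s, ∑ a, πstar s a = 1)
    (Vstar : S → ℝ)
    (hVstar : ∀ s, Vstar s =
      ∑ a, πstar s a * (R (s, a) + γ * ∑ s', P (s, a) s' * Vstar s'))
    (π : ℕ → S → A → ℝ)
    (hπnonneg : ∀ n s a, 0 ≤ π n s a) (hπsum : ∀ n s, ∑ a, π n s a = 1)
    (V : ℕ → S → ℝ)
    (hV : ∀ n s, V n s =
      ∑ a, π n s a * (R (s, a) + γ * ∑ s', P (s, a) s' * V n s'))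
    (hTV : Filter.Tendsto
      (fun n => Finset.univ.sup' Finset.univ_nonempty
        (fun s : S => (1 / 2) * ∑ a, |π n s a - πstar s a|))
      Filter.atTop (nhds 0)) :
    Filter.Tendsto
      (fun n => Finset.univ.sup' Finset.univ_nonempty
        (fun s : S => |V n s - Vstar s|))
      Filter.atTop (nhds 0) :=
  value_convergence_of_policy_tv_convergence_general γ hγ P hPnonneg hPsum R πstar Vstar hVstar π
    hπnonneg hπsum V hV hTV
end

section
/- Let n ≥ 1, let α > 0, let Q_min ≤ Q_max be real numbers with Δ = Q_max − Q_min, and let q ∈ ℝⁿ satisfy q_i ∈ [Q_min, Q_max] for all i. For a probability vector b ∈ ℝⁿ define the base-measure softmax Φ_b ∈ ℝⁿ by Φ_b(i) = b_i·exp(q_i/α) / ∑_{j=1}^n b_j·exp(q_j/α), whenever ∑_j b_j·exp(q_j/α) > 0. Then for all probability vectors b, b' ∈ ℝⁿ, ∑_{i=1}^n |Φ_b(i) − Φ_{b'}(i)| ≤ 2·exp(Δ/α)·∑_{i=1}^n |b_i − b'_i|. -/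
/-!
Write `w i = exp (q i / α)`, so that `Φ_b` is `b` reweighted by `w` and normalised by
`S_b = ∑ b i w i`. Splitting
`Φ_b i - Φ_{b'} i = (b i - b' i) w i / S_b + Φ_{b'} i (S_{b'} - S_b) / S_b`
and summing, both terms are bounded by `∑ |b i - b' i| w i / S_b`, since `Φ_{b'}` is a
probability vector and `|S_{b'} - S_b| ≤ ∑ |b i - b' i| w i`. Finally `w ≤ exp (Q_max / α)`
and `S_b ≥ exp (Q_min / α)`.
-/

open Finset

namespace Reweight

variable {ι : Type*} [Fintype ι]

noncomputable def reweight (w b : ι → ℝ) (i : ι) : ℝ :=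
  b i * w i / ∑ j, b j * w j

variable {w b b' : ι → ℝ}

theorem sum_reweight (hS : ∑ j, b j * w j ≠ 0) : ∑ i, reweight w b i = 1 := by
  simp only [reweight, ← sum_div, div_self hS]

theorem reweight_nonneg (hw : ∀ i, 0 ≤ w i) (hb : ∀ i, 0 ≤ b i) (i : ι) :
    0 ≤ reweight w b i :=
  div_nonneg (mul_nonneg (hb i) (hw i)) (sum_nonneg fun j _ => mul_nonneg (hb j) (hw j))

theorem reweight_sub_reweight (hS : ∑ j, b j * w j ≠ 0) (hS' : ∑ j, b' j * w j ≠ 0)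
    (i : ι) :
    reweight w b i - reweight w b' i =
      (b i - b' i) * w i / ∑ j, b j * w j +
        reweight w b' i * (∑ j, b' j * w j - ∑ j, b j * w j) / ∑ j, b j * w j := by
  simp only [reweight]
  field_simp
  ring

theorem abs_sum_mul_sub_sum_mul_le (hw : ∀ i, 0 ≤ w i) :
    |∑ j, b' j * w j - ∑ j, b j * w j| ≤ ∑ i, |b i - b' i| * w i := by
  rw [← sum_sub_distrib]
  refine (abs_sum_le_sum_abs _ _).trans (sum_le_sum fun i _ => ?_)
  rw [← sub_mul, abs_mul, abs_of_nonneg (hw i), abs_sub_comm]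

theorem sum_abs_reweight_sub_le (hw : ∀ i, 0 ≤ w i) (hb' : ∀ i, 0 ≤ b' i)
    (hS : 0 < ∑ j, b j * w j) (hS' : ∑ j, b' j * w j ≠ 0) :
    ∑ i, |reweight w b i - reweight w b' i| ≤
      2 * (∑ i, |b i - b' i| * w i) / ∑ j, b j * w j := by
  set S := ∑ j, b j * w j
  set S' := ∑ j, b' j * w j
  calc ∑ i, |reweight w b i - reweight w b' i|
      ≤ ∑ i, (|b i - b' i| * w i / S + reweight w b' i * |S' - S| / S) := by
        refine sum_le_sum fun i _ => ?_
        rw [reweight_sub_reweight hS.ne' hS']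
        refine (abs_add_le _ _).trans_eq ?_
        rw [abs_div, abs_div, abs_mul, abs_mul, abs_of_nonneg (hw i), abs_of_pos hS,
          abs_of_nonneg (reweight_nonneg hw hb' i)]
    _ = (∑ i, |b i - b' i| * w i) / S + |S' - S| / S := by
        rw [sum_add_distrib, ← sum_div, ← sum_div, ← sum_mul, sum_reweight hS', one_mul]
    _ ≤ (∑ i, |b i - b' i| * w i) / S + (∑ i, |b i - b' i| * w i) / S := by
        gcongr
        exact abs_sum_mul_sub_sum_mul_le hw
    _ = 2 * (∑ i, |b i - b' i| * w i) / S := by ring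

theorem le_sum_mul_of_le {E : ℝ} (hE : ∀ i, E ≤ w i) (hb : ∀ i, 0 ≤ b i)
    (hbs : ∑ i, b i = 1) : E ≤ ∑ i, b i * w i :=
  calc E = ∑ i, b i * E := by rw [← sum_mul, hbs, one_mul]
    _ ≤ ∑ i, b i * w i := sum_le_sum fun i _ => mul_le_mul_of_nonneg_left (hE i) (hb i)

end Reweight

open Reweight

theorem softmax_lipschitz_in_base_measure_general
    (n : ℕ)
    (α : ℝ) (hα : 0 < α)
    (Qmin Qmax : ℝ) (Δ : ℝ) (hΔ : Δ = Qmax - Qmin)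
    (q : Fin n → ℝ) (hq : ∀ i, q i ∈ Set.Icc Qmin Qmax)
    (Φ : (Fin n → ℝ) → Fin n → ℝ)
    (hΦ : ∀ b i, Φ b i =
      b i * Real.exp (q i / α) / ∑ j, b j * Real.exp (q j / α)) :
    ∀ b b' : Fin n → ℝ,
      (∀ i, 0 ≤ b i) → (∑ i, b i = 1) →
      (∀ i, 0 ≤ b' i) → (∑ i, b' i = 1) →
      ∑ i, |Φ b i - Φ b' i| ≤ 2 * Real.exp (Δ / α) * ∑ i, |b i - b' i| := by
  intro b b' hb hbs hb' hb's
  set w : Fin n → ℝ := fun i => Real.exp (q i / α)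
  have hΦw : Φ = fun b => reweight w b := funext fun b => funext (hΦ b)
  have hw_lower : ∀ i, Real.exp (Qmin / α) ≤ w i := fun i =>
    Real.exp_le_exp.2 (div_le_div_of_nonneg_right (hq i).1 hα.le)
  have hw_upper : ∀ i, w i ≤ Real.exp (Qmax / α) := fun i =>
    Real.exp_le_exp.2 (div_le_div_of_nonneg_right (hq i).2 hα.le)
  have hw : ∀ i, 0 ≤ w i := fun i => (Real.exp_pos _).le
  have hS := le_sum_mul_of_le hw_lower hb hbs
  have hS' := le_sum_mul_of_le hw_lower hb' hb's
  have hnum : ∑ i, |b i - b' i| * w i ≤ Real.exp (Qmax / α) * ∑ i, |b i - b' i| := by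
    rw [mul_sum]
    exact sum_le_sum fun i _ => by rw [mul_comm]; gcongr; exact hw_upper i
  have hratio : Real.exp (Δ / α) = Real.exp (Qmax / α) / Real.exp (Qmin / α) := by
    rw [← Real.exp_sub, hΔ, sub_div]
  rw [hΦw, hratio]
  refine (sum_abs_reweight_sub_le hw hb' ((Real.exp_pos _).trans_le hS)
    ((Real.exp_pos _).trans_le hS').ne').trans ?_
  rw [mul_div_assoc, mul_assoc, div_mul_eq_mul_div]
  gcongr

/-- ℓ¹-Lipschitz continuity of the base-measure softmax in the
base measure: with `qᵢ ∈ [Q_min, Q_max]`, `Δ = Q_max − Q_min`, and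
`Φ_b(i) = bᵢ·exp(qᵢ/α) / ∑ⱼ bⱼ·exp(qⱼ/α)`, for all probability vectors `b, b'`,
`∑ᵢ |Φ_b(i) − Φ_{b'}(i)| ≤ 2·exp(Δ/α)·∑ᵢ |bᵢ − b'ᵢ|`. -/
theorem softmax_lipschitz_in_base_measure
    (n : ℕ) (hn : 1 ≤ n)
    (α : ℝ) (hα : 0 < α)
    (Qmin Qmax : ℝ) (hQ : Qmin ≤ Qmax) (Δ : ℝ) (hΔ : Δ = Qmax - Qmin)
    (q : Fin n → ℝ) (hq : ∀ i, q i ∈ Set.Icc Qmin Qmax)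
    (Φ : (Fin n → ℝ) → Fin n → ℝ)
    (hΦ : ∀ b i, Φ b i =
      b i * Real.exp (q i / α) / ∑ j, b j * Real.exp (q j / α)) :
    ∀ b b' : Fin n → ℝ,
      (∀ i, 0 ≤ b i) → (∑ i, b i = 1) →
      (∀ i, 0 ≤ b' i) → (∑ i, b' i = 1) →
      ∑ i, |Φ b i - Φ b' i| ≤ 2 * Real.exp (Δ / α) * ∑ i, |b i - b' i| :=
  softmax_lipschitz_in_base_measure_general n α hα Qmin Qmax Δ hΔ q hq Φ hΦ
end

section
/- Let λ > 0, let (η_t)_{t∈ℕ} be a sequence with η_t ∈ (0, 1/λ] for all t and ∑_{t=0}^∞ η_t = ∞, let (β_t)_{t∈ℕ} be a sequence of nonnegative reals with β_t → 0, and let (ε_t)_{t∈ℕ} be a sequence of nonnegative reals satisfying ε_{t+1} ≤ (1 − η_t·λ)·ε_t + η_t·β_t for all t. Then ε_t → 0 as t → ∞. -/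
/-!
Rescaling by `λ` turns the recursion into `ε_{t+1} ≤ (1 - a_t) ε_t + a_t b_t` with `a_t = η_t λ ∈ [0, 1]`,
`∑ a_t = ∞` and `b_t = β_t / λ → 0`. Once `b_t ≤ c` for `t ≥ T`, the excess `ε_t - c` is contracted
by the factor `1 - a_t` at every step, so `ε_{T+n} - c ≤ (ε_T - c) ∏_{k<n} (1 - a_{T+k})`, and this product
is at most `exp (-∑_{k<n} a_{T+k}) → 0`. Hence `limsup ε_t ≤ c` for every `c > 0`.
-/

open Filter Finset Topology

theorem Real.prod_one_sub_le_exp_neg_sum {ι : Type*} (s : Finset ι) (a : ι → ℝ)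
    (ha : ∀ i ∈ s, a i ≤ 1) : ∏ i ∈ s, (1 - a i) ≤ Real.exp (-∑ i ∈ s, a i) := by
  rw [← sum_neg_distrib, Real.exp_sum]
  exact prod_le_prod (fun i hi => sub_nonneg.2 (ha i hi)) fun i _ => Real.one_sub_le_exp_neg _

theorem tendsto_sum_range_shift_atTop {a : ℕ → ℝ}
    (ha : Tendsto (fun n => ∑ t ∈ range n, a t) atTop atTop) (T : ℕ) :
    Tendsto (fun n => ∑ t ∈ range n, a (T + t)) atTop atTop := by
  have hshift : Tendsto (fun n => ∑ t ∈ range (n + T), a t) atTop atTop :=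
    (tendsto_add_atTop_iff_nat T).2 ha
  have heq : ∀ n, ∑ t ∈ range n, a (T + t) = ∑ t ∈ range (n + T), a t + -∑ t ∈ range T, a t := by
    intro n
    rw [add_comm n, sum_range_add]
    ring
  simpa only [heq] using tendsto_atTop_add_const_right _ _ hshift

theorem tendsto_prod_one_sub_of_tendsto_sum_atTop {a : ℕ → ℝ} (ha : ∀ t, a t ≤ 1)
    (hsum : Tendsto (fun n => ∑ t ∈ range n, a t) atTop atTop) :
    Tendsto (fun n => ∏ t ∈ range n, (1 - a t)) atTop (𝓝 0) :=
  squeeze_zero (fun _ => prod_nonneg fun t _ => sub_nonneg.2 (ha t))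
    (fun _ => Real.prod_one_sub_le_exp_neg_sum _ a fun t _ => ha t)
    (Real.tendsto_exp_neg_atTop_nhds_zero.comp hsum)

section Recursion

variable {a b ε : ℕ → ℝ}

theorem sub_le_prod_one_sub_mul_of_rec (ha₀ : ∀ t, 0 ≤ a t) (ha₁ : ∀ t, a t ≤ 1) {c : ℝ}
    (hb : ∀ t, b t ≤ c) (hrec : ∀ t, ε (t + 1) ≤ (1 - a t) * ε t + a t * b t) (n : ℕ) :
    ε n - c ≤ (∏ t ∈ range n, (1 - a t)) * (ε 0 - c) := by
  induction n with
  | zero => simp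
  | succ n ih =>
    calc ε (n + 1) - c ≤ (1 - a n) * (ε n - c) + a n * (b n - c) := by linarith [hrec n]
      _ ≤ (1 - a n) * (ε n - c) :=
        add_le_of_le_of_nonpos le_rfl (mul_nonpos_of_nonneg_of_nonpos (ha₀ n) (by linarith [hb n]))
      _ ≤ (1 - a n) * ((∏ t ∈ range n, (1 - a t)) * (ε 0 - c)) :=
        mul_le_mul_of_nonneg_left ih (sub_nonneg.2 (ha₁ n))
      _ = (∏ t ∈ range (n + 1), (1 - a t)) * (ε 0 - c) := by rw [prod_range_succ]; ring

theorem eventually_lt_of_rec (ha₀ : ∀ t, 0 ≤ a t) (ha₁ : ∀ t, a t ≤ 1)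
    (hsum : Tendsto (fun n => ∑ t ∈ range n, a t) atTop atTop)
    (hrec : ∀ t, ε (t + 1) ≤ (1 - a t) * ε t + a t * b t) {c d : ℝ}
    (hb : ∀ᶠ t in atTop, b t ≤ c) (hcd : c < d) : ∀ᶠ t in atTop, ε t < d := by
  obtain ⟨T, hT⟩ := eventually_atTop.1 hb
  have hbound (n : ℕ) : ε (T + n) - c ≤ (∏ t ∈ range n, (1 - a (T + t))) * (ε T - c) :=
    sub_le_prod_one_sub_mul_of_rec (a := fun t => a (T + t)) (b := fun t => b (T + t))
      (ε := fun t => ε (T + t)) (fun t => ha₀ _) (fun t => ha₁ _)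
      (fun t => hT _ (Nat.le_add_right _ _)) (fun t => hrec (T + t)) n
  have hprod : Tendsto (fun n => (∏ t ∈ range n, (1 - a (T + t))) * (ε T - c)) atTop (𝓝 0) := by
    simpa only [zero_mul] using (tendsto_prod_one_sub_of_tendsto_sum_atTop (fun t => ha₁ _)
      (tendsto_sum_range_shift_atTop hsum T)).mul_const (ε T - c)
  have hshift : ∀ᶠ n in atTop, ε (n + T) < d := by
    filter_upwards [hprod.eventually (gt_mem_nhds (sub_pos.2 hcd))] with n hn
    rw [add_comm]
    linarith [hbound n]
  rw [← map_add_atTop_eq_nat T, eventually_map]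
  exact hshift

theorem tendsto_zero_of_rec (ha₀ : ∀ t, 0 ≤ a t) (ha₁ : ∀ t, a t ≤ 1)
    (hsum : Tendsto (fun n => ∑ t ∈ range n, a t) atTop atTop) (hb : Tendsto b atTop (𝓝 0))
    (hε : ∀ t, 0 ≤ ε t) (hrec : ∀ t, ε (t + 1) ≤ (1 - a t) * ε t + a t * b t) :
    Tendsto ε atTop (𝓝 0) := by
  refine tendsto_order.2 ⟨fun d hd => Eventually.of_forall fun t => hd.trans_le (hε t),
    fun d hd => eventually_lt_of_rec ha₀ ha₁ hsum hrec ?_ (half_lt_self hd)⟩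
  exact hb.eventually (ge_mem_nhds (half_pos hd))

end Recursion

theorem tracking_recursion_tendsto_zero_general
    (lam : ℝ) (hlam : 0 < lam)
    (η : ℕ → ℝ)
    (hη : ∀ t, η t ∈ Set.Ioc (0 : ℝ) (1 / lam))
    (hηsum : Filter.Tendsto (fun n => ∑ t ∈ Finset.range n, η t)
      Filter.atTop Filter.atTop)
    (β : ℕ → ℝ)
    (hβ : Filter.Tendsto β Filter.atTop (nhds 0))
    (ε : ℕ → ℝ) (hεnonneg : ∀ t, 0 ≤ ε t)
    (hrec : ∀ t, ε (t + 1) ≤ (1 - η t * lam) * ε t + η t * β t) :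
    Filter.Tendsto ε Filter.atTop (nhds 0) := by
  have hstep_le_one (t : ℕ) : η t * lam ≤ 1 := (le_div_iff₀ hlam).1 (hη t).2
  have hsum : Tendsto (fun n => ∑ t ∈ range n, η t * lam) atTop atTop := by
    simpa only [← sum_mul] using hηsum.atTop_mul_const hlam
  refine tendsto_zero_of_rec (b := fun t => β t / lam) (fun t => mul_nonneg (hη t).1.le hlam.le)
    hstep_le_one hsum (by simpa using hβ.div_const lam) hεnonneg fun t => ?_
  calc ε (t + 1) ≤ (1 - η t * lam) * ε t + η t * β t := hrec t
    _ = (1 - η t * lam) * ε t + η t * lam * (β t / lam) := by field_simp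

/-- deterministic tracking recursion: if `λ > 0`,
`η_t ∈ (0, 1/λ]` with `∑ η_t = ∞`, `β_t ≥ 0` with `β_t → 0`, and the
nonnegative errors satisfy `ε_{t+1} ≤ (1 − η_t·λ)·ε_t + η_t·β_t`, then
`ε_t → 0`. -/
theorem tracking_recursion_tendsto_zero
    (lam : ℝ) (hlam : 0 < lam)
    (η : ℕ → ℝ)
    (hη : ∀ t, η t ∈ Set.Ioc (0 : ℝ) (1 / lam))
    (hηsum : Filter.Tendsto (fun n => ∑ t ∈ Finset.range n, η t)
      Filter.atTop Filter.atTop)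
    (β : ℕ → ℝ) (hβnonneg : ∀ t, 0 ≤ β t)
    (hβ : Filter.Tendsto β Filter.atTop (nhds 0))
    (ε : ℕ → ℝ) (hεnonneg : ∀ t, 0 ≤ ε t)
    (hrec : ∀ t, ε (t + 1) ≤ (1 - η t * lam) * ε t + η t * β t) :
    Filter.Tendsto ε Filter.atTop (nhds 0) :=
  tracking_recursion_tendsto_zero_general lam hlam η hη hηsum β hβ ε hεnonneg hrec
end
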